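/- The max-plus recurrence c(t) = max(f(t) + c(t-1), u(t)) (with c(1) = u(1)) coincides with the score of the prefix x_1…x_t under the max-plus WFSA B with μ(x_t) = u(t) and φ(x_t) = f(t), for all t ≥ 1. -/
import Mathlib


/-- Transition weights of the two-state WFSA `B` over the max-plus semiring
(encoded in `EReal`): self-loop on `q0` with weight `0`, `q0 → q1` with
weight `μ a`, self-loop on `q1` with weight `φ a`; missing arcs `−∞ = ⊥`. -/
noncomputable def mpTau {A : Type*} (μ φ : A → ℝ) : Fin 2 → Fin 2 → A → EReal :=
  fun q q' a =>
  if q = 0 ∧ q' = 0 then 0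
  else if q = 0 ∧ q' = 1 then (μ a : EReal)
  else if q = 1 ∧ q' = 1 then (φ a : EReal)
  else ⊥

/-- Max-plus score of the prefix `x_1 … x_t` under the WFSA `B`:
`q0` initial with weight `0`, `q1` final with weight `0`; the string score is
the maximum over accepting paths of the sums of weights along the path. -/
noncomputable def mpScore {A : Type*} (μ φ : A → ℝ) (x : ℕ → A) (t : ℕ) : EReal :=
  ⨆ p : Fin (t + 1) → Fin 2,
    (if p 0 = 0 then (0 : EReal) else ⊥) +
      (∑ i : Fin t, mpTau μ φ (p i.castSucc) (p i.succ) (x (i.1 + 1))) +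
      (if p (Fin.last t) = 1 then (0 : EReal) else ⊥)

open Finset

/-- The score of the "switch at step `k`" path. -/
noncomputable def mpG {A : Type*} (μ φ : A → ℝ) (x : ℕ → A) (t k : ℕ) : ℝ :=
  μ (x (k + 1)) + ∑ i ∈ Finset.Ico (k + 1) t, φ (x (i + 1))

/-- Path score (the body of the `iSup` in `mpScore`). -/
noncomputable def mpPath {A : Type*} (μ φ : A → ℝ) (x : ℕ → A) (t : ℕ)
    (p : Fin (t + 1) → Fin 2) : EReal :=
  (if p 0 = 0 then (0 : EReal) else ⊥) +
    (∑ i : Fin t, mpTau μ φ (p i.castSucc) (p i.succ) (x (i.1 + 1))) +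
    (if p (Fin.last t) = 1 then (0 : EReal) else ⊥)

lemma mpScore_eq_iSup {A : Type*} (μ φ : A → ℝ) (x : ℕ → A) (t : ℕ) :
    mpScore μ φ x t = ⨆ p, mpPath μ φ x t p := rfl

private lemma fin2_eq_zero {a : Fin 2} (h : a ≠ 1) : a = 0 := by
  revert h; revert a; decide

/-- coercion ℝ → EReal as an AddMonoidHom -/
noncomputable def realToEReal : ℝ →+ EReal :=
  ⟨⟨Real.toEReal, EReal.coe_zero⟩, EReal.coe_add⟩

lemma ereal_coe_sum {ι : Type*} (s : Finset ι) (f : ι → ℝ) :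
    ((∑ i ∈ s, f i : ℝ) : EReal) = ∑ i ∈ s, (f i : EReal) :=
  map_sum realToEReal f s

lemma ereal_sum_bot {ι : Type*} (s : Finset ι) (f : ι → EReal) (i : ι)
    (hi : i ∈ s) (h : f i = ⊥) : ∑ j ∈ s, f j = ⊥ := by
  classical
  rw [← Finset.add_sum_erase s f hi, h, EReal.bot_add]

/-- The recurrence satisfied by `c` matches the maximum of `mpG`. -/
lemma mpG_bound {A : Type*} (μ φ : A → ℝ) (x : ℕ → A) (c : ℕ → ℝ)
    (h1 : c 1 = μ (x 1))
    (hrec : ∀ t, 2 ≤ t → c t = max (φ (x t) + c (t - 1)) (μ (x t))) :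
    ∀ t, 1 ≤ t → (∀ k, k < t → mpG μ φ x t k ≤ c t) ∧
      (∃ k, k < t ∧ mpG μ φ x t k = c t) := by
  intro t ht
  induction t with
  | zero => omega
  | succ t ih =>
    rcases Nat.eq_or_lt_of_le ht with h | h
    · -- t + 1 = 1
      have ht0 : t = 0 := by omega
      subst ht0
      constructor
      · intro k hk
        have hk0 : k = 0 := by omega
        subst hk0
        simp [mpG, h1]
      · exact ⟨0, by norm_num, by simp [mpG, h1]⟩
    · have ht1 : 1 ≤ t := by omega
      obtain ⟨hb, k0, hk0, hg0⟩ := ih ht1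
      have hc : c (t + 1) = max (φ (x (t + 1)) + c t) (μ (x (t + 1))) := by
        have := hrec (t + 1) (by omega)
        simpa using this
      have hstep : ∀ k, k < t → mpG μ φ x (t + 1) k = mpG μ φ x t k + φ (x (t + 1)) := by
        intro k hk
        unfold mpG
        rw [Finset.sum_Ico_succ_top (by omega)]
        ring
      have hlast : mpG μ φ x (t + 1) t = μ (x (t + 1)) := by
        simp [mpG]
      constructor
      · intro k hk
        rcases Nat.lt_or_ge k t with hk' | hk'
        · rw [hstep k hk', hc]
          have := hb k hk'
          calc mpG μ φ x t k + φ (x (t + 1)) ≤ c t + φ (x (t + 1)) := by linarith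
            _ = φ (x (t + 1)) + c t := by ring
            _ ≤ _ := le_max_left _ _
        · have : k = t := by omega
          subst this
          rw [hlast, hc]
          exact le_max_right _ _
      · rcases max_cases (φ (x (t + 1)) + c t) (μ (x (t + 1))) with ⟨hm, _⟩ | ⟨hm, _⟩
        · refine ⟨k0, by omega, ?_⟩
          rw [hstep k0 hk0, hc, hm, hg0]; ring
        · exact ⟨t, by omega, by rw [hlast, hc, hm]⟩

/-- The switch-at-`k` path. -/
def mpP (t k : ℕ) : Fin (t + 1) → Fin 2 := fun j => if (j : ℕ) ≤ k then 0 else 1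

lemma mpPath_mpP {A : Type*} (μ φ : A → ℝ) (x : ℕ → A) (t k : ℕ) (hk : k < t) :
    mpPath μ φ x t (mpP t k) = ((mpG μ φ x t k : ℝ) : EReal) := by
  have h0 : mpP t k 0 = 0 := by simp [mpP]
  have hl : mpP t k (Fin.last t) = 1 := by
    simp [mpP, Fin.last]; omega
  rw [mpPath, h0, hl, if_pos rfl, if_pos rfl, add_zero, zero_add]
  have hsummand : ∀ i : Fin t,
      mpTau μ φ (mpP t k i.castSucc) (mpP t k i.succ) (x (i.1 + 1)) =
        Real.toEReal (if (i : ℕ) < k then (0 : ℝ) else if (i : ℕ) = k then μ (x (i.1 + 1))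
          else φ (x (i.1 + 1))) := by
    intro i
    have hc : ((i.castSucc : Fin (t + 1)) : ℕ) = (i : ℕ) := rfl
    have hs : ((i.succ : Fin (t + 1)) : ℕ) = (i : ℕ) + 1 := rfl
    rcases Nat.lt_trichotomy (i : ℕ) k with h | h | h
    · have h1 : mpP t k i.castSucc = 0 := by simp [mpP, hc]; omega
      have h2 : mpP t k i.succ = 0 := by simp [mpP, hs]; omega
      rw [h1, h2, if_pos h]
      simp [mpTau]
    · have h1 : mpP t k i.castSucc = 0 := by simp [mpP, hc]; omega
      have h2 : mpP t k i.succ = 1 := by simp [mpP, hs]; omega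
      rw [h1, h2, if_neg (by omega), if_pos h]
      simp [mpTau]
    · have h1 : mpP t k i.castSucc = 1 := by simp [mpP, hc]; omega
      have h2 : mpP t k i.succ = 1 := by simp [mpP, hs]; omega
      rw [h1, h2, if_neg (by omega), if_neg (by omega)]
      simp [mpTau]
  rw [Finset.sum_congr rfl (fun i _ => hsummand i)]
  rw [← ereal_coe_sum]
  congr 1
  have : ∑ i : Fin t, (if (i : ℕ) < k then (0 : ℝ) else if (i : ℕ) = k then μ (x (i.1 + 1))
      else φ (x (i.1 + 1))) =
      ∑ i ∈ Finset.range t, (if i < k then (0 : ℝ) else if i = k then μ (x (i + 1))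
      else φ (x (i + 1))) :=
    Fin.sum_univ_eq_sum_range (fun i => if i < k then (0 : ℝ) else if i = k then μ (x (i + 1)) else φ (x (i + 1))) t
  rw [this, mpG]
  rw [Finset.range_eq_Ico, ← Finset.sum_Ico_consecutive _ (Nat.zero_le (k + 1)) (by omega)]
  congr 1
  · rw [← Finset.range_eq_Ico]
    have : ∀ i ∈ Finset.range (k + 1),
        (if i < k then (0 : ℝ) else if i = k then μ (x (i + 1)) else φ (x (i + 1))) =
        (if i = k then μ (x (k + 1)) else 0) := by
      intro i hi
      rcases Nat.lt_or_ge i k with h | h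
      · rw [if_pos h, if_neg (by omega)]
      · have : i = k := by simp at hi; omega
        subst this
        rw [if_neg (by omega), if_pos rfl, if_pos rfl]
    rw [Finset.sum_congr rfl this, Finset.sum_ite_eq' (Finset.range (k + 1)) k
      (fun _ => μ (x (k + 1))), if_pos (by simp)]
  · apply Finset.sum_congr rfl
    intro i hi
    simp only [Finset.mem_Ico] at hi
    rw [if_neg (by omega), if_neg (by omega)]

lemma mpPath_le {A : Type*} (μ φ : A → ℝ) (x : ℕ → A) (t : ℕ) (ht : 1 ≤ t)
    (b : ℝ) (hb : ∀ k, k < t → mpG μ φ x t k ≤ b)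
    (p : Fin (t + 1) → Fin 2) : mpPath μ φ x t p ≤ ((b : ℝ) : EReal) := by
  by_cases h0 : p 0 = 0
  case neg =>
    rw [mpPath, if_neg h0, EReal.bot_add, EReal.bot_add]
    exact bot_le
  by_cases hl : p (Fin.last t) = 1
  case neg =>
    rw [mpPath, if_neg hl, EReal.add_bot]
    exact bot_le
  by_cases hmono : ∀ i : Fin t, p i.castSucc = 1 → p i.succ = 1
  case neg =>
    push_neg at hmono
    obtain ⟨i, hi1, hi2⟩ := hmono
    have hi2' : p i.succ = 0 := fin2_eq_zero hi2
    have : mpTau μ φ (p i.castSucc) (p i.succ) (x (i.1 + 1)) = ⊥ := by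
      rw [hi1, hi2']
      simp [mpTau]
    rw [mpPath, ereal_sum_bot _ _ i (Finset.mem_univ i) this, EReal.add_bot, EReal.bot_add]
    exact bot_le
  -- monotone case: p is a switch path
  classical
  have hex : ∃ n : ℕ, ∃ h : n < t + 1, p ⟨n, h⟩ = 1 := ⟨t, by omega, hl⟩
  set K := Nat.find hex with hK
  obtain ⟨hKlt, hpK⟩ := Nat.find_spec hex
  have hKpos : 1 ≤ K := by
    rcases Nat.eq_zero_or_pos K with h | h
    · exfalso
      have := hpK
      rw [show (⟨K, hKlt⟩ : Fin (t + 1)) = 0 from by ext; simp [h]] at this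
      rw [h0] at this
      exact absurd this (by decide)
    · exact h
  have hKle : K ≤ t := by omega
  -- p j = 1 for all j ≥ K
  have hup : ∀ n (hn : n < t + 1), K ≤ n → p ⟨n, hn⟩ = 1 := by
    intro n
    induction n with
    | zero => intro hn h; omega
    | succ n ihn =>
      intro hn hKn
      rcases Nat.lt_or_ge n K with h | h
      · have : n + 1 = K := by omega
        rw [show (⟨n + 1, hn⟩ : Fin (t + 1)) = ⟨K, hKlt⟩ from by ext; simp [this]]
        exact hpK
      · have hn' : n < t + 1 := by omega
        have h1 : p ⟨n, hn'⟩ = 1 := ihn hn' h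
        have hnt : n < t := by omega
        have := hmono ⟨n, hnt⟩ (by
          rw [show (⟨n, hnt⟩ : Fin t).castSucc = ⟨n, hn'⟩ from rfl]; exact h1)
        rwa [show (⟨n, hnt⟩ : Fin t).succ = ⟨n + 1, hn⟩ from rfl] at this
  -- p j = 0 for all j < K
  have hdown : ∀ n (hn : n < t + 1), n < K → p ⟨n, hn⟩ = 0 := by
    intro n hn h
    have := Nat.find_min hex h
    push_neg at this
    exact fin2_eq_zero (this hn)
  have hpeq : p = mpP t (K - 1) := by
    funext j
    rcases Nat.lt_or_ge (j : ℕ) K with h | h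
    · rw [show j = (⟨(j : ℕ), j.isLt⟩ : Fin (t + 1)) from rfl]
      rw [hdown _ j.isLt h]
      simp only [mpP]
      rw [if_pos (show ((⟨(j : ℕ), j.isLt⟩ : Fin (t + 1)) : ℕ) ≤ K - 1 by simp; omega)]
    · rw [show j = (⟨(j : ℕ), j.isLt⟩ : Fin (t + 1)) from rfl]
      rw [hup _ j.isLt h]
      simp only [mpP]
      rw [if_neg (show ¬((⟨(j : ℕ), j.isLt⟩ : Fin (t + 1)) : ℕ) ≤ K - 1 by simp; omega)]
  rw [hpeq, mpPath_mpP μ φ x t (K - 1) (by omega)]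
  exact_mod_cast hb (K - 1) (by omega)

/-- The max-plus recurrence `c(1) = μ(x_1)`,
`c(t) = max( φ(x_t) + c(t-1), μ(x_t) )` coincides with the score of the prefix
`x_1 … x_t` under the max-plus WFSA `B`, for all `t ≥ 1`. -/
theorem stmt14 {A : Type*} [Fintype A] (μ φ : A → ℝ) (x : ℕ → A) (c : ℕ → ℝ)
    (h1 : c 1 = μ (x 1))
    (hrec : ∀ t, 2 ≤ t → c t = max (φ (x t) + c (t - 1)) (μ (x t))) :
    ∀ t, 1 ≤ t → (c t : EReal) = mpScore μ φ x t := by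
  intro t ht
  obtain ⟨hb, k0, hk0, hg0⟩ := mpG_bound μ φ x c h1 hrec t ht
  rw [mpScore_eq_iSup]
  apply le_antisymm
  · calc ((c t : ℝ) : EReal) = ((mpG μ φ x t k0 : ℝ) : EReal) := by rw [hg0]
      _ = mpPath μ φ x t (mpP t k0) := (mpPath_mpP μ φ x t k0 hk0).symm
      _ ≤ _ := le_iSup _ (mpP t k0)
  · exact iSup_le fun p => mpPath_le μ φ x t ht (c t) hb p
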